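/- Under Assumption 1 (independent folds, within-fold null p-value independence from covariates, super-uniform nulls), the IHW-BY procedure — weighted BH applied at level α/(Σ_{k=1}^m 1/k) with cross-weights satisfying Σ_i W_i = m a.s. and P_i ⊥ W_i for each null i — controls the FDR at level α: E[V/(R∨1)] ≤ α. -/

import Mathlib

open MeasureTheory ProbabilityTheory Classical

/-- The number of rejections of the weighted Benjamini–Hochberg procedure at level `α`:
`k* = max {k : at least k hypotheses satisfy P i ≤ α W i k / m}`. -/
noncomputable def wBHRejCount (m : ℕ) (P W : Fin m → ℝ) (α : ℝ) : ℕ :=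
  sSup {k : ℕ |
    k ≤ (Finset.univ.filter (fun i : Fin m => P i ≤ α * W i * k / m)).card}

/-- Hypothesis `i` is rejected by the weighted BH procedure at level `α`. -/
noncomputable def wBHRejects (m : ℕ) (P W : Fin m → ℝ) (α : ℝ) (i : Fin m) : Prop :=
  P i ≤ α * W i * (wBHRejCount m P W α) / m

open Set

/-!
For a null `i` put `c = α' W_i / m`. As `R ≤ m` and `i` is rejected iff `P_i ≤ c R`, its
contribution `1{P_i ≤ c R} / (R ∨ 1)` to the FDP is at most a function of `(c, P_i)` alone,
essentially `1 / ⌈P_i / c⌉`. Independence of `P_i` and `W_i` lets us integrate out `P_i` for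
fixed `W_i`, and Abel summation against the super-uniform distribution function of `P_i` gives
`E[1 / ⌈P_i / c⌉ | W_i] ≤ c (1 + 1/2 + ⋯ + 1/m) ≤ α W_i / m`. Summing over the nulls and using
`∑ W_i = m` bounds the FDR by `α`.
-/

lemma add_sum_mul_sub_le_mul_harmonic {G : ℕ → ℝ} {c : ℝ} (hG : ∀ j, G j ≤ c * j) (m : ℕ) :
    G 0 + ∑ j ∈ Finset.range m, 1 / ((j : ℝ) + 1) * (G (j + 1) - G j)
      ≤ c * ∑ j ∈ Finset.range m, 1 / ((j : ℝ) + 1) := by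
  -- Abel summation, carrying the nonnegative defect `(c m - G m) / (m + 1)`.
  suffices key : ∀ n : ℕ, G 0 + ∑ j ∈ Finset.range n, 1 / ((j : ℝ) + 1) * (G (j + 1) - G j)
      + (c * n - G n) / (n + 1) ≤ c * ∑ j ∈ Finset.range n, 1 / ((j : ℝ) + 1) by
    have hdefect : 0 ≤ (c * m - G m) / (m + 1) := div_nonneg (by linarith [hG m]) (by positivity)
    linarith [key m]
  intro n
  induction n with
  | zero => simp
  | succ n ih =>
    have hstep : 1 / ((n : ℝ) + 1) * (G (n + 1) - G n) + (c * (n + 1) - G (n + 1)) / (n + 2)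
        - (c * n - G n) / (n + 1) - c * (1 / (n + 1))
        = (G (n + 1) - c * (n + 1)) / ((n + 1) * (n + 2)) := by
      field_simp
      ring
    have hGn : G (n + 1) ≤ c * (n + 1) := by exact_mod_cast hG (n + 1)
    have hle : (G (n + 1) - c * (n + 1)) / ((n + 1) * (n + 2)) ≤ 0 :=
      div_nonpos_of_nonpos_of_nonneg (by linarith) (by positivity)
    rw [Finset.sum_range_succ, Finset.sum_range_succ]
    push_cast
    rw [show (n : ℝ) + 1 + 1 = n + 2 by ring]
    linarith

lemma measure_Iic_zero_add_sum_le {ν : Measure ℝ} [IsFiniteMeasure ν] {c : ℝ} (hc : 0 ≤ c)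
    (hν : ∀ t, 0 ≤ t → ν (Iic t) ≤ ENNReal.ofReal t) (m : ℕ) :
    ν (Iic 0) + ∑ j ∈ Finset.range m,
        ENNReal.ofReal (1 / ((j : ℝ) + 1)) * ν (Ioc (c * j) (c * (j + 1)))
      ≤ ENNReal.ofReal (c * ∑ j ∈ Finset.range m, 1 / ((j : ℝ) + 1)) := by
  set G : ℕ → ℝ := fun j => ν.real (Iic (c * j))
  have hG : ∀ j, G j ≤ c * j := fun j =>
    ENNReal.toReal_le_of_le_ofReal (by positivity) (hν _ (by positivity))
  have hIoc : ∀ j : ℕ, ν.real (Ioc (c * j) (c * (j + 1))) = G (j + 1) - G j := fun j => by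
    rw [← Iic_sdiff_Iic, measureReal_sdiff (Iic_subset_Iic.2 (by gcongr; linarith))
      measurableSet_Iic]
    simp [G]
  calc _ = ENNReal.ofReal
        (G 0 + ∑ j ∈ Finset.range m, 1 / ((j : ℝ) + 1) * (G (j + 1) - G j)) := by
        rw [ENNReal.ofReal_add measureReal_nonneg (Finset.sum_nonneg fun j _ => ?_),
          ENNReal.ofReal_sum_of_nonneg fun j _ => ?_]
        · congr 1
          · simp
          · refine Finset.sum_congr rfl fun j _ => ?_
            rw [← hIoc, ENNReal.ofReal_mul (by positivity), ofReal_measureReal]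
        all_goals rw [← hIoc]; positivity
    _ ≤ _ := ENNReal.ofReal_le_ofReal (add_sum_mul_sub_le_mul_harmonic hG m)

/-- For `c > 0`, this is `1 / ⌈p / c⌉` on `(0, c m]`, `1` on `p ≤ 0` and `0` beyond `c m`. -/
noncomputable def invCeilDiv (m : ℕ) (c p : ℝ) : ENNReal :=
  (Iic 0).indicator 1 p + ∑ j ∈ Finset.range m,
    (Ioc (c * j) (c * (j + 1))).indicator (fun _ => ENNReal.ofReal (1 / ((j : ℝ) + 1))) p

lemma measurable_invCeilDiv (m : ℕ) : Measurable fun z : ℝ × ℝ => invCeilDiv m z.1 z.2 := by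
  refine (measurable_const.indicator (measurableSet_Iic.preimage measurable_snd)).add
    (Finset.measurable_sum _ fun j _ => ?_)
  have hset : MeasurableSet {z : ℝ × ℝ | z.2 ∈ Ioc (z.1 * j) (z.1 * (j + 1))} :=
    (measurableSet_lt (by fun_prop) measurable_snd).inter
      (measurableSet_le measurable_snd (by fun_prop))
  exact measurable_const.indicator hset

lemma lintegral_invCeilDiv_le {ν : Measure ℝ} [IsFiniteMeasure ν] {c : ℝ} (hc : 0 ≤ c)
    (hν : ∀ t, 0 ≤ t → ν (Iic t) ≤ ENNReal.ofReal t) (m : ℕ) :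
    ∫⁻ p, invCeilDiv m c p ∂ν ≤ ENNReal.ofReal (c * ∑ j ∈ Finset.range m, 1 / ((j : ℝ) + 1)) := by
  refine le_of_eq_of_le ?_ (measure_Iic_zero_add_sum_le hc hν m)
  unfold invCeilDiv
  rw [lintegral_add_left (measurable_one.indicator measurableSet_Iic),
    lintegral_finsetSum _ fun j _ => measurable_const.indicator measurableSet_Ioc]
  simp [measurableSet_Ioc]

lemma exists_nat_mul_lt_le {c p : ℝ} (hc : 0 < c) (hp : 0 < p) :
    ∃ j : ℕ, c * j < p ∧ p ≤ c * (j + 1) := by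
  have hceil : 1 ≤ ⌈p / c⌉₊ := Nat.one_le_iff_ne_zero.2 (Nat.ceil_pos.2 (div_pos hp hc)).ne'
  refine ⟨⌈p / c⌉₊ - 1, ?_, ?_⟩
  · rw [← lt_div_iff₀' hc]
    exact Nat.lt_ceil.1 (by omega)
  · rw [← div_le_iff₀' hc, Nat.cast_sub hceil]
    simpa using Nat.le_ceil (p / c)

lemma ofReal_inv_le_invCeilDiv {m r : ℕ} {c p : ℝ} (hrm : r ≤ m) (hp : p ≤ c * r) :
    ENNReal.ofReal (1 / ((max r 1 : ℕ) : ℝ)) ≤ invCeilDiv m c p := by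
  rcases le_or_gt p 0 with hp0 | hp0
  · calc ENNReal.ofReal (1 / ((max r 1 : ℕ) : ℝ)) ≤ 1 :=
          ENNReal.ofReal_le_one.2 (div_le_one_of_le₀ (by exact_mod_cast le_max_right r 1)
            (by positivity))
      _ = (Iic 0).indicator 1 p := by simp [hp0]
      _ ≤ invCeilDiv m c p := le_self_add
  · have hc : 0 < c := pos_of_mul_pos_left (hp0.trans_le hp) r.cast_nonneg
    obtain ⟨j, hjp, hpj⟩ := exists_nat_mul_lt_le hc hp0
    have hjr : j < r := by exact_mod_cast (mul_lt_mul_iff_right₀ hc).1 (hjp.trans_le hp)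
    calc ENNReal.ofReal (1 / ((max r 1 : ℕ) : ℝ)) ≤ ENNReal.ofReal (1 / ((j : ℝ) + 1)) := by
          gcongr
          exact_mod_cast hjr.trans_le (le_max_left r 1)
      _ = (Ioc (c * j) (c * (j + 1))).indicator (fun _ => ENNReal.ofReal (1 / ((j : ℝ) + 1))) p :=
          (indicator_of_mem (mem_Ioc.2 ⟨hjp, hpj⟩) (fun _ => _)).symm
      _ ≤ ∑ k ∈ Finset.range m,
            (Ioc (c * k) (c * (k + 1))).indicator (fun _ => ENNReal.ofReal (1 / ((k : ℝ) + 1))) p :=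
          Finset.single_le_sum (f := fun k : ℕ => (Ioc (c * k) (c * (k + 1))).indicator
            (fun _ => ENNReal.ofReal (1 / ((k : ℝ) + 1))) p) (fun _ _ => zero_le)
            (Finset.mem_range.2 (hjr.trans_le hrm))
      _ ≤ invCeilDiv m c p := le_add_self

lemma wBHRejCount_le (m : ℕ) (P W : Fin m → ℝ) (α : ℝ) : wBHRejCount m P W α ≤ m :=
  csSup_le' fun _ hk => hk.trans ((Finset.card_filter_le _ _).trans (by simp))

lemma ofReal_fdp_le_sum_invCeilDiv (m : ℕ) (H0 : Finset (Fin m)) (P W : Fin m → ℝ) (α : ℝ) :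
    ENNReal.ofReal ((H0.filter (wBHRejects m P W α)).card / max (wBHRejCount m P W α) 1)
      ≤ ∑ i ∈ H0, invCeilDiv m (α * W i / m) (P i) := by
  rw [Finset.card_filter, Nat.cast_sum, Finset.sum_div,
    ENNReal.ofReal_sum_of_nonneg fun i _ => by positivity]
  refine Finset.sum_le_sum fun i _ => ?_
  split_ifs with hrej
  · simpa using ofReal_inv_le_invCeilDiv (wBHRejCount_le m P W α)
      (hrej.trans_eq (mul_div_right_comm _ _ _))
  · simp

lemma ProbabilityTheory.IndepFun.lintegral_comp_eq_lintegral_map {Ω α β : Type*}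
    [MeasurableSpace Ω] [MeasurableSpace α] [MeasurableSpace β] {μ : Measure Ω}
    [IsFiniteMeasure μ] {X : Ω → α} {Y : Ω → β} (hXY : IndepFun X Y μ) (hX : Measurable X)
    (hY : Measurable Y) {f : α → β → ENNReal} (hf : Measurable (Function.uncurry f)) :
    ∫⁻ ω, f (X ω) (Y ω) ∂μ = ∫⁻ ω, ∫⁻ x, f x (Y ω) ∂(μ.map X) ∂μ := by
  calc ∫⁻ ω, f (X ω) (Y ω) ∂μ = ∫⁻ z, Function.uncurry f z ∂(μ.map fun ω => (X ω, Y ω)) :=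
        (lintegral_map hf (hX.prodMk hY)).symm
    _ = ∫⁻ z, Function.uncurry f z ∂((μ.map X).prod (μ.map Y)) := by
        rw [hXY.map_prod_eq_prod_map_map hX.aemeasurable hY.aemeasurable]
    _ = ∫⁻ y, ∫⁻ x, f x y ∂(μ.map X) ∂(μ.map Y) := lintegral_prod_symm' _ hf
    _ = ∫⁻ ω, ∫⁻ x, f x (Y ω) ∂(μ.map X) ∂μ := lintegral_map hf.lintegral_prod_left hY

lemma measure_map_Iic_le_ofReal {Ω : Type*} [MeasurableSpace Ω] {μ : Measure Ω}
    [IsProbabilityMeasure μ] {X : Ω → ℝ} (hX : Measurable X)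
    (h : ∀ t ∈ Icc (0 : ℝ) 1, μ {ω | X ω ≤ t} ≤ ENNReal.ofReal t) {t : ℝ} (ht : 0 ≤ t) :
    μ.map X (Iic t) ≤ ENNReal.ofReal t := by
  rw [Measure.map_apply hX measurableSet_Iic]
  rcases le_or_gt t 1 with ht1 | ht1
  · exact h t ⟨ht, ht1⟩
  · exact prob_le_one.trans (ENNReal.one_le_ofReal.2 ht1.le)

lemma sum_lintegral_ofReal_mul_div_le {Ω : Type*} [MeasurableSpace Ω] {μ : Measure Ω}
    [IsProbabilityMeasure μ] {m : ℕ} {W : Fin m → Ω → ℝ} (hW : ∀ i, Measurable (W i))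
    (hW0 : ∀ i ω, 0 ≤ W i ω) (hWsum : ∀ᵐ ω ∂μ, ∑ i, W i ω = m) (s : Finset (Fin m))
    {a : ℝ} (ha : 0 ≤ a) :
    ∑ i ∈ s, ∫⁻ ω, ENNReal.ofReal (a * W i ω / m) ∂μ ≤ ENNReal.ofReal a := by
  calc ∑ i ∈ s, ∫⁻ ω, ENNReal.ofReal (a * W i ω / m) ∂μ
      ≤ ∑ i, ∫⁻ ω, ENNReal.ofReal (a * W i ω / m) ∂μ :=
        Finset.sum_le_sum_of_subset (Finset.subset_univ s)
    _ = ∫⁻ ω, ENNReal.ofReal (a * (∑ i, W i ω) / m) ∂μ := by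
        rw [← lintegral_finsetSum _ fun i _ => by fun_prop]
        refine lintegral_congr fun ω => ?_
        rw [← ENNReal.ofReal_sum_of_nonneg fun i _ => by have := hW0 i ω; positivity,
          Finset.mul_sum, Finset.sum_div]
    _ = ∫⁻ _, ENNReal.ofReal (a * m / m) ∂μ :=
        lintegral_congr_ae (hWsum.mono fun ω h => by simp only [h])
    _ ≤ ENNReal.ofReal a := by
        rw [lintegral_const, measure_univ, mul_one, mul_div_assoc]
        exact ENNReal.ofReal_le_ofReal (mul_le_of_le_one_right ha (div_self_le_one _))

-- No measurability is needed: a non-integrable `f` has Bochner integral `0`.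
lemma integral_le_of_lintegral_ofReal_le {Ω : Type*} [MeasurableSpace Ω] {μ : Measure Ω}
    {f : Ω → ℝ} (hf : ∀ ω, 0 ≤ f ω) {a : ℝ} (ha : 0 ≤ a)
    (h : ∫⁻ ω, ENNReal.ofReal (f ω) ∂μ ≤ ENNReal.ofReal a) : ∫ ω, f ω ∂μ ≤ a :=
  calc ∫ ω, f ω ∂μ ≤ ‖∫ ω, f ω ∂μ‖ := Real.le_norm_self _
    _ ≤ (∫⁻ ω, ENNReal.ofReal ‖f ω‖ ∂μ).toReal := norm_integral_le_lintegral_norm f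
    _ ≤ a := ENNReal.toReal_le_of_le_ofReal ha (by simpa [Real.norm_of_nonneg (hf _)] using h)

theorem ihw_by_fdr_control_general
    {Ω : Type*} [MeasurableSpace Ω] (μ : Measure Ω) [IsProbabilityMeasure μ]
    (m : ℕ) (H0 : Finset (Fin m))
    (P W : Fin m → Ω → ℝ)
    (hPmeas : ∀ i, Measurable (P i)) (hWmeas : ∀ i, Measurable (W i))
    (hsuper : ∀ i ∈ H0, ∀ t ∈ Set.Icc (0 : ℝ) 1,
      μ {ω | P i ω ≤ t} ≤ ENNReal.ofReal t)
    (hindep : ∀ i ∈ H0, IndepFun (P i) (W i) μ)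
    (hWnonneg : ∀ i, ∀ ω, 0 ≤ W i ω)
    (hWsum : ∀ᵐ ω ∂μ, ∑ i, W i ω = (m : ℝ))
    (α : ℝ) (hα : α ∈ Set.Ioo (0 : ℝ) 1)
    -- the level of the weighted BH procedure: `α' = α / (∑_{k=1}^m 1/k)`
    (α' : ℝ) (hα' : α' = α / (∑ k ∈ Finset.range m, (1 : ℝ) / (k + 1))) :
    ∫ ω,
      (((H0.filter (fun i => wBHRejects m (fun j => P j ω) (fun j => W j ω) α' i)).card : ℝ)
        / max (wBHRejCount m (fun j => P j ω) (fun j => W j ω) α') 1) ∂μ ≤ α := by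
  set H := ∑ k ∈ Finset.range m, (1 : ℝ) / (k + 1)
  have hH : 0 ≤ H := Finset.sum_nonneg fun k _ => by positivity
  have hα'0 : 0 ≤ α' := by rw [hα']; exact div_nonneg hα.1.le hH
  have hα'H : α' * H ≤ α := by
    rcases hH.eq_or_lt with hH0 | hHpos
    · simp [← hH0, hα.1.le]
    · rw [hα', div_mul_cancel₀ _ hHpos.ne']
  have hmeas : ∀ i, Measurable fun ω => invCeilDiv m (α' * W i ω / m) (P i ω) := fun i =>
    (measurable_invCeilDiv m).comp ((((hWmeas i).const_mul α').div_const _).prodMk (hPmeas i))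
  have hnull : ∀ i ∈ H0, ∫⁻ ω, invCeilDiv m (α' * W i ω / m) (P i ω) ∂μ
      ≤ ∫⁻ ω, ENNReal.ofReal (α * W i ω / m) ∂μ := by
    intro i hi
    rw [(hindep i hi).lintegral_comp_eq_lintegral_map (hPmeas i) (hWmeas i)
      (f := fun p w => invCeilDiv m (α' * w / m) p)
      ((measurable_invCeilDiv m).comp (f := fun z : ℝ × ℝ => (α' * z.2 / m, z.1)) (by fun_prop))]
    refine lintegral_mono fun ω => (lintegral_invCeilDiv_le (by have := hWnonneg i ω; positivity)
      (fun t => measure_map_Iic_le_ofReal (hPmeas i) (hsuper i hi)) m).trans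
      (ENNReal.ofReal_le_ofReal ?_)
    calc α' * W i ω / m * H = α' * H * (W i ω / m) := by ring
      _ ≤ α * (W i ω / m) := by have := hWnonneg i ω; gcongr
      _ = α * W i ω / m := by ring
  refine integral_le_of_lintegral_ofReal_le (fun ω => by positivity) hα.1.le ?_
  calc _ ≤ ∫⁻ ω, ∑ i ∈ H0, invCeilDiv m (α' * W i ω / m) (P i ω) ∂μ :=
        lintegral_mono fun ω => ofReal_fdp_le_sum_invCeilDiv m H0 _ _ α'
    _ = ∑ i ∈ H0, ∫⁻ ω, invCeilDiv m (α' * W i ω / m) (P i ω) ∂μ :=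
        lintegral_finsetSum _ fun i _ => hmeas i
    _ ≤ ∑ i ∈ H0, ∫⁻ ω, ENNReal.ofReal (α * W i ω / m) ∂μ := Finset.sum_le_sum hnull
    _ ≤ ENNReal.ofReal α := sum_lintegral_ofReal_mul_div_le hWmeas hWnonneg hWsum H0 hα.1.le

/-- **IHW-BY FDR control (Theorem 1b).**
If the null p-values are super-uniform, each null p-value is independent of its weight
(as guaranteed by cross-weighting under Assumption 1), and the weights are nonnegative and
sum to `m` almost surely, then the weighted BH procedure applied at level
`α / (∑_{k=1}^m 1/k)` (i.e. weighted Benjamini–Yekutieli at level `α`) controls the FDR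
at level `α`. -/
theorem ihw_by_fdr_control
    {Ω : Type*} [MeasurableSpace Ω] (μ : Measure Ω) [IsProbabilityMeasure μ]
    (m : ℕ) (hm : 0 < m) (H0 : Finset (Fin m))
    (P W : Fin m → Ω → ℝ)
    (hPmeas : ∀ i, Measurable (P i)) (hWmeas : ∀ i, Measurable (W i))
    (hsuper : ∀ i ∈ H0, ∀ t ∈ Set.Icc (0 : ℝ) 1,
      μ {ω | P i ω ≤ t} ≤ ENNReal.ofReal t)
    (hindep : ∀ i ∈ H0, IndepFun (P i) (W i) μ)
    (hWnonneg : ∀ i, ∀ ω, 0 ≤ W i ω)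
    (hWsum : ∀ᵐ ω ∂μ, ∑ i, W i ω = (m : ℝ))
    (α : ℝ) (hα : α ∈ Set.Ioo (0 : ℝ) 1)
    -- the level of the weighted BH procedure: `α' = α / (∑_{k=1}^m 1/k)`
    (α' : ℝ) (hα' : α' = α / (∑ k ∈ Finset.range m, (1 : ℝ) / (k + 1))) :
    ∫ ω,
      (((H0.filter (fun i => wBHRejects m (fun j => P j ω) (fun j => W j ω) α' i)).card : ℝ)
        / max (wBHRejCount m (fun j => P j ω) (fun j => W j ω) α') 1) ∂μ ≤ α :=
  ihw_by_fdr_control_general μ m H0 P W hPmeas hWmeas hsuper hindep hWnonneg hWsum α hα α' hα'
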